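/- arXiv:2603.02232 — 8 statements merged into one kernel-verified Lean document; each statement's English description precedes it below -/
import Mathlib

section
/- Let a, s, b ∈ ℝ with a < s < b, and define L(c) = −log(σ(c(b − s)) − σ(c(a − s))) for c > 0. Then L(c) > 0 for every c > 0, the infimum of L over c ∈ (0, ∞) equals 0, and this infimum is not attained at any c > 0. In particular, the unregularized negative log-likelihood objective restricted to the scaling ray has no finite optimal solution. -/
noncomputable def sigmoid (t : ℝ) : ℝ := 1 / (1 + Real.exp (-t))

lemma sigmoid_pos (t : ℝ) : 0 < sigmoid t := by
  unfold sigmoid; positivity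

lemma sigmoid_lt_one (t : ℝ) : sigmoid t < 1 := by
  unfold sigmoid
  rw [div_lt_one (by positivity)]
  linarith [Real.exp_pos (-t)]

lemma sigmoid_strictMono : StrictMono sigmoid := by
  intro x y hxy
  unfold sigmoid
  apply one_div_lt_one_div_of_lt (by positivity)
  have := Real.exp_lt_exp.mpr (neg_lt_neg hxy)
  linarith

open Filter Topology

lemma sigmoid_tendsto_atTop : Tendsto sigmoid atTop (nhds 1) := by
  have h1 : Tendsto (fun t : ℝ => 1 + Real.exp (-t)) atTop (nhds 1) := by
    simpa using tendsto_const_nhds.add Real.tendsto_exp_neg_atTop_nhds_zero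
  have h2 := h1.inv₀ (by norm_num)
  have heq : sigmoid = fun t : ℝ => (1 + Real.exp (-t))⁻¹ := by
    funext t; simp [sigmoid, one_div]
  rw [heq]; simpa using h2

lemma sigmoid_tendsto_atBot : Tendsto sigmoid atBot (nhds 0) := by
  have h0 : Tendsto (fun t : ℝ => Real.exp (-t)) atBot atTop := by
    exact Real.tendsto_exp_atTop.comp tendsto_neg_atBot_atTop
  have h1 : Tendsto (fun t : ℝ => 1 + Real.exp (-t)) atBot atTop :=
    tendsto_atTop_add_const_left _ _ h0
  have h2 := tendsto_inv_atTop_zero.comp h1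
  have heq : sigmoid = fun t : ℝ => (1 + Real.exp (-t))⁻¹ := by
    funext t; simp [sigmoid, one_div]
  rw [heq]; exact h2

/-- The unregularized per-example NLL objective along the scaling ray
is positive, has infimum `0`, and the infimum is not attained. -/
theorem nll_loss_no_finite_minimizer
    (a s b : ℝ) (has : a < s) (hsb : s < b)
    (L : ℝ → ℝ)
    (hL : ∀ c, L c = -Real.log (sigmoid (c * (b - s)) - sigmoid (c * (a - s)))) :
    (∀ c > (0 : ℝ), 0 < L c) ∧
    sInf (L '' Set.Ioi (0 : ℝ)) = 0 ∧
    ∀ c > (0 : ℝ), L c ≠ sInf (L '' Set.Ioi (0 : ℝ)) := by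
  set D : ℝ → ℝ := fun c => sigmoid (c * (b - s)) - sigmoid (c * (a - s)) with hD
  have hDpos : ∀ c > (0 : ℝ), 0 < D c := by
    intro c hc
    have : c * (a - s) < c * (b - s) := by nlinarith
    simpa [hD] using sub_pos.mpr (sigmoid_strictMono this)
  have hDlt : ∀ c > (0 : ℝ), D c < 1 := by
    intro c hc
    have h1 := sigmoid_lt_one (c * (b - s))
    have h2 := sigmoid_pos (c * (a - s))
    simp only [hD]; linarith
  have hpos : ∀ c > (0 : ℝ), 0 < L c := by
    intro c hc
    rw [hL c]
    have := Real.log_neg (hDpos c hc) (hDlt c hc)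
    linarith
  -- tendsto
  have hbs : (0:ℝ) < b - s := by linarith
  have hsa : (0:ℝ) < s - a := by linarith
  have t1 : Tendsto (fun c : ℝ => c * (b - s)) atTop atTop :=
    Tendsto.atTop_mul_const hbs tendsto_id
  have t2 : Tendsto (fun c : ℝ => c * (s - a)) atTop atTop :=
    Tendsto.atTop_mul_const hsa tendsto_id
  have t2' : Tendsto (fun c : ℝ => c * (a - s)) atTop atBot := by
    have h := tendsto_neg_atTop_atBot.comp t2
    exact h.congr fun c => by simp [Function.comp]; ring
  have tD : Tendsto D atTop (nhds 1) := by
    have h1 := sigmoid_tendsto_atTop.comp t1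
    have h2 := sigmoid_tendsto_atBot.comp t2'
    simpa [hD] using h1.sub h2
  have tL : Tendsto L atTop (nhds 0) := by
    have hlog : Tendsto (fun c => Real.log (D c)) atTop (nhds 0) := by
      have := (Real.continuousAt_log (by norm_num : (1:ℝ) ≠ 0)).tendsto.comp tD
      simpa [Function.comp_def] using this
    have := hlog.neg
    simp only [neg_zero] at this
    refine this.congr' ?_
    filter_upwards [eventually_gt_atTop 0] with c hc
    rw [hL c]
  have hne : (L '' Set.Ioi (0 : ℝ)).Nonempty := ⟨L 1, 1, by norm_num, rfl⟩
  have hbdd : BddBelow (L '' Set.Ioi (0 : ℝ)) := by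
    refine ⟨0, ?_⟩
    rintro x ⟨c, hc, rfl⟩
    exact (hpos c hc).le
  have hinf : sInf (L '' Set.Ioi (0 : ℝ)) = 0 := by
    apply le_antisymm
    · rw [Real.sInf_le_iff hbdd hne]
      intro ε hε
      have hev : ∀ᶠ c in atTop, L c < ε := by
        have := tL.eventually (eventually_lt_nhds hε)
        simpa using this
      obtain ⟨c, hc1, hc2⟩ := (hev.and (eventually_gt_atTop 0)).exists
      exact ⟨L c, ⟨c, hc2, rfl⟩, by linarith⟩
    · apply le_csInf hne
      rintro x ⟨c, hc, rfl⟩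
      exact (hpos c hc).le
  refine ⟨hpos, hinf, ?_⟩
  intro c hc
  rw [hinf]
  exact (hpos c hc).ne'
end

section
/- Let a, s, b ∈ ℝ with a < s < b. Then the function c ↦ σ(c(b − s)) − σ(c(a − s)) is strictly increasing on (0, ∞) and tends to 1 as c → ∞; consequently, the function c ↦ −log(σ(c(b − s)) − σ(c(a − s))) is strictly decreasing on (0, ∞) and tends to 0 as c → ∞. -/
lemma sigmoid_tendsto_atTop_s6 : Filter.Tendsto sigmoid Filter.atTop (nhds 1) := by
  have h : Filter.Tendsto (fun t : ℝ => 1 / (1 + Real.exp (-t)))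
      Filter.atTop (nhds (1 / (1 + 0))) := by
    apply Filter.Tendsto.div tendsto_const_nhds
    · exact Filter.Tendsto.const_add 1 (Real.tendsto_exp_comp_nhds_zero.mpr
        Filter.tendsto_neg_atTop_atBot)
    · norm_num
  have he : sigmoid = fun t : ℝ => 1 / (1 + Real.exp (-t)) := rfl
  rw [he]; simpa using h

lemma sigmoid_tendsto_atBot_s6 : Filter.Tendsto sigmoid Filter.atBot (nhds 0) := by
  have h : Filter.Tendsto (fun t : ℝ => 1 + Real.exp (-t)) Filter.atBot Filter.atTop := by
    apply Filter.tendsto_atTop_add_const_left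
    exact Real.tendsto_exp_atTop.comp Filter.tendsto_neg_atBot_atTop
  simpa [sigmoid] using h.inv_tendsto_atTop.const_mul (1 : ℝ) |>.congr (by
    intro t; simp [sigmoid, one_div])

/-- For `a < s < b`, the scaled interval probability
`c ↦ σ(c(b-s)) - σ(c(a-s))` is strictly increasing on `(0, ∞)` and tends to `1`,
hence its negative logarithm is strictly decreasing on `(0, ∞)` and tends to `0`. -/
theorem nll_correct_example_monotone
    (a s b : ℝ) (has : a < s) (hsb : s < b) :
    StrictMonoOn (fun c : ℝ => sigmoid (c * (b - s)) - sigmoid (c * (a - s)))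
      (Set.Ioi 0) ∧
    Filter.Tendsto (fun c : ℝ => sigmoid (c * (b - s)) - sigmoid (c * (a - s)))
      Filter.atTop (nhds 1) ∧
    StrictAntiOn
      (fun c : ℝ => -Real.log (sigmoid (c * (b - s)) - sigmoid (c * (a - s))))
      (Set.Ioi 0) ∧
    Filter.Tendsto
      (fun c : ℝ => -Real.log (sigmoid (c * (b - s)) - sigmoid (c * (a - s))))
      Filter.atTop (nhds 0) := by
  have hb : (0 : ℝ) < b - s := by linarith
  have ha : a - s < 0 := by linarith
  have hmono : StrictMonoOn (fun c : ℝ => sigmoid (c * (b - s)) - sigmoid (c * (a - s)))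
      (Set.Ioi 0) := by
    intro x _ y _ hxy
    have h1 : sigmoid (x * (b - s)) < sigmoid (y * (b - s)) :=
      sigmoid_strictMono (by nlinarith)
    have h2 : sigmoid (y * (a - s)) < sigmoid (x * (a - s)) :=
      sigmoid_strictMono (by nlinarith)
    simp only
    linarith
  have hpos : ∀ c ∈ Set.Ioi (0 : ℝ),
      0 < sigmoid (c * (b - s)) - sigmoid (c * (a - s)) := by
    intro c hc
    have : sigmoid (c * (a - s)) < sigmoid (c * (b - s)) :=
      sigmoid_strictMono (by nlinarith [Set.mem_Ioi.mp hc])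
    linarith
  have htend : Filter.Tendsto (fun c : ℝ => sigmoid (c * (b - s)) - sigmoid (c * (a - s)))
      Filter.atTop (nhds 1) := by
    have h1 : Filter.Tendsto (fun c : ℝ => sigmoid (c * (b - s))) Filter.atTop (nhds 1) :=
      sigmoid_tendsto_atTop_s6.comp (Filter.Tendsto.atTop_mul_const hb Filter.tendsto_id)
    have h2 : Filter.Tendsto (fun c : ℝ => sigmoid (c * (a - s))) Filter.atTop (nhds 0) :=
      sigmoid_tendsto_atBot_s6.comp (Filter.Tendsto.atTop_mul_const_of_neg ha Filter.tendsto_id)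
    simpa using h1.sub h2
  refine ⟨hmono, htend, ?_, ?_⟩
  · intro x hx y hy hxy
    have hfx := hpos x hx
    have hlt := hmono hx hy hxy
    simp only at hlt ⊢
    have := Real.log_lt_log hfx hlt
    linarith
  · have hlog : Filter.Tendsto
        (fun c : ℝ => Real.log (sigmoid (c * (b - s)) - sigmoid (c * (a - s))))
        Filter.atTop (nhds (Real.log 1)) :=
      (Real.continuousAt_log one_ne_zero).tendsto.comp htend
    rw [Real.log_one] at hlog
    simpa using hlog.neg
end

section
/- Let a, s, b ∈ ℝ with s < a < b. Then lim_{c → ∞} (−log(σ(c(b − s)) − σ(c(a − s))))/c = a − s; that is, for a reward difference falling below the lower threshold of its label's interval, the negative log-likelihood loss grows linearly in the scale c with asymptotic slope a − s. -/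
open Filter

lemma log_one_add_div_tendsto (g : ℝ → ℝ) (hg : Tendsto g atTop (nhds 0)) :
    Tendsto (fun c => Real.log (1 + g c) / c) atTop (nhds 0) := by
  have h : Tendsto (fun c => Real.log (1 + g c)) atTop (nhds 0) := by
    have := (Real.continuousAt_log (by norm_num : (1:ℝ) + 0 ≠ 0)).tendsto.comp
      (tendsto_const_nhds.add hg)
    simpa [Function.comp_def] using this
  exact h.div_atTop tendsto_id

lemma exp_neg_mul_tendsto (k : ℝ) (hk : 0 < k) :
    Tendsto (fun c : ℝ => Real.exp (-(c * k))) atTop (nhds 0) := by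
  have h1 : Tendsto (fun c : ℝ => -(c * k)) atTop atBot := by
    exact tendsto_neg_atTop_atBot.comp (Tendsto.atTop_mul_const hk tendsto_id)
  exact Real.tendsto_exp_atBot.comp h1

/-- For a reward difference `s` below the lower threshold `a` of its
label's interval `(a, b)`, the scaled NLL loss grows linearly with slope `a - s`. -/
theorem nll_below_interval_linear_growth
    (a s b : ℝ) (hsa : s < a) (hab : a < b) :
    Filter.Tendsto
      (fun c : ℝ =>
        (-Real.log (sigmoid (c * (b - s)) - sigmoid (c * (a - s)))) / c)
      Filter.atTop (nhds (a - s)) := by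
  have hu : 0 < a - s := sub_pos.2 hsa
  have hd : 0 < b - a := sub_pos.2 hab
  have hv : 0 < b - s := lt_trans hu (by linarith)
  have hA := exp_neg_mul_tendsto _ hu
  have hBv := exp_neg_mul_tendsto _ hv
  have hE := exp_neg_mul_tendsto _ hd
  have h1 := log_one_add_div_tendsto _ hA
  have h2 := log_one_add_div_tendsto _ hBv
  have h3 := log_one_add_div_tendsto _ (by simpa using hE.neg)
  have hlim : Tendsto (fun c : ℝ =>
      (a - s) - Real.log (1 + -Real.exp (-(c * (b - a)))) / c
        + Real.log (1 + Real.exp (-(c * (b - s)))) / c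
        + Real.log (1 + Real.exp (-(c * (a - s)))) / c) atTop (nhds (a - s)) := by
    have := (((tendsto_const_nhds (x := a - s)).sub h3).add h2).add h1
    simpa using this
  refine hlim.congr' ?_
  filter_upwards [eventually_gt_atTop (0 : ℝ)] with c hc
  set A := Real.exp (-(c * (a - s))) with hAdef
  set E := Real.exp (-(c * (b - a))) with hEdef
  have hApos : 0 < A := Real.exp_pos _
  have hEpos : 0 < E := Real.exp_pos _
  have hElt : E < 1 := by
    rw [hEdef]
    exact Real.exp_lt_one_iff.2 (by nlinarith)
  have hB : Real.exp (-(c * (b - s))) = A * E := by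
    rw [hAdef, hEdef, ← Real.exp_add]; ring_nf
  have h1A : (0:ℝ) < 1 + A := by linarith
  have h1B : (0:ℝ) < 1 + A * E := by positivity
  have h1E : (0:ℝ) < 1 - E := by linarith
  have hval : sigmoid (c * (b - s)) - sigmoid (c * (a - s))
      = (A * (1 - E)) / ((1 + A * E) * (1 + A)) := by
    simp only [sigmoid, neg_neg]
    rw [hB]
    field_simp
    ring
  have hlog : Real.log (sigmoid (c * (b - s)) - sigmoid (c * (a - s)))
      = -(c * (a - s)) + Real.log (1 - E) - Real.log (1 + A * E) - Real.log (1 + A) := by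
    rw [hval, Real.log_div (by positivity) (by positivity),
      Real.log_mul (ne_of_gt hApos) (ne_of_gt h1E),
      Real.log_mul (ne_of_gt h1B) (ne_of_gt h1A), hAdef, Real.log_exp]
    ring
  rw [hlog, ← hB]
  have hc' : c ≠ 0 := ne_of_gt hc
  field_simp
  ring_nf
end

section
/- Let a, b, s ∈ ℝ with a < b < s. Then lim_{c → ∞} (−log(σ(c(b − s)) − σ(c(a − s))))/c = s − b; that is, for a reward difference exceeding the upper threshold of its label's interval, the negative log-likelihood loss grows linearly in the scale c with asymptotic slope s − b. -/
lemma sigmoid_eq (t : ℝ) : sigmoid t = Real.exp t / (Real.exp t + 1) := by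
  rw [sigmoid, Real.exp_neg]
  have h := (Real.exp_pos t).ne'
  field_simp

lemma sigmoid_lt (x y : ℝ) (h : x < y) : sigmoid x < sigmoid y := by
  rw [sigmoid, sigmoid]
  have h1 : Real.exp (-y) < Real.exp (-x) := Real.exp_lt_exp.2 (by linarith)
  have h2 : 0 < 1 + Real.exp (-y) := by positivity
  apply one_div_lt_one_div_of_lt h2
  linarith

/-- For a reward difference `s` above the upper threshold `b` of its
label's interval `(a, b)`, the scaled NLL loss grows linearly with slope `s - b`. -/
theorem nll_above_interval_linear_growth
    (a b s : ℝ) (hab : a < b) (hbs : b < s) :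
    Filter.Tendsto
      (fun c : ℝ =>
        (-Real.log (sigmoid (c * (b - s)) - sigmoid (c * (a - s)))) / c)
      Filter.atTop (nhds (s - b)) := by
  set u := b - s with hu
  set v := a - s with hv
  have huv : v < u := by simp [hu, hv]; linarith
  have hu0 : u < 0 := by simp [hu]; linarith
  have hvu0 : v - u < 0 := by linarith
  set f : ℝ → ℝ := fun c => 1 / (Real.exp (c * u) + 1)
      - Real.exp (c * (v - u)) / (Real.exp (c * v) + 1) with hf
  have key : ∀ c : ℝ, sigmoid (c * u) - sigmoid (c * v) = Real.exp (c * u) * f c := by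
    intro c
    have e1 : Real.exp (c * u) * Real.exp (c * (v - u)) = Real.exp (c * v) := by
      rw [← Real.exp_add]; ring_nf
    rw [sigmoid_eq, sigmoid_eq, hf]
    have h1 : Real.exp (c * u) + 1 ≠ 0 := by positivity
    have h2 : Real.exp (c * v) + 1 ≠ 0 := by positivity
    field_simp
    nlinarith [e1, Real.exp_pos (c * u), Real.exp_pos (c * v)]
  have hfpos : ∀ c : ℝ, 0 < c → 0 < f c := by
    intro c hc
    have h := sigmoid_lt (c * v) (c * u) (by nlinarith)
    have := key c
    nlinarith [Real.exp_pos (c * u)]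
  -- eventual equality
  have heq : ∀ᶠ c in Filter.atTop, (-Real.log (sigmoid (c * u) - sigmoid (c * v))) / c
      = (s - b) - Real.log (f c) * c⁻¹ := by
    filter_upwards [Filter.eventually_gt_atTop 0] with c hc
    rw [key c, Real.log_mul (Real.exp_ne_zero _) (hfpos c hc).ne', Real.log_exp, hu]
    field_simp
    ring
  rw [show s - b = (s - b) - 0 * 0 by ring]
  refine Filter.Tendsto.congr' (Filter.EventuallyEq.symm heq) ?_
  have hfl : Filter.Tendsto f Filter.atTop (nhds 1) := by
    have hcu : Filter.Tendsto (fun c : ℝ => Real.exp (c * u)) Filter.atTop (nhds 0) := by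
      apply Real.tendsto_exp_atBot.comp
      exact Filter.Tendsto.atTop_mul_const_of_neg hu0 Filter.tendsto_id
    have hcvu : Filter.Tendsto (fun c : ℝ => Real.exp (c * (v - u))) Filter.atTop (nhds 0) := by
      apply Real.tendsto_exp_atBot.comp
      exact Filter.Tendsto.atTop_mul_const_of_neg hvu0 Filter.tendsto_id
    have hcv : Filter.Tendsto (fun c : ℝ => Real.exp (c * v)) Filter.atTop (nhds 0) := by
      apply Real.tendsto_exp_atBot.comp
      exact Filter.Tendsto.atTop_mul_const_of_neg (by linarith : v < 0) Filter.tendsto_id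
    have h1 : Filter.Tendsto (fun c : ℝ => 1 / (Real.exp (c * u) + 1)) Filter.atTop (nhds 1) := by
      have := hcu.add (tendsto_const_nhds (x := (1:ℝ)))
      simpa using this.inv₀ (by norm_num)
    have h2 : Filter.Tendsto (fun c : ℝ => Real.exp (c * (v - u)) / (Real.exp (c * v) + 1))
        Filter.atTop (nhds 0) := by
      have := hcv.add (tendsto_const_nhds (x := (1:ℝ)))
      have h := hcvu.div this (by norm_num)
      rw [zero_div] at h
      exact h
    rw [hf]
    simpa using h1.sub h2
  have hlog : Filter.Tendsto (fun c => Real.log (f c)) Filter.atTop (nhds 0) := by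
    have := (Real.continuousAt_log one_ne_zero).tendsto.comp hfl
    rw [Real.log_one] at this
    exact this
  exact tendsto_const_nhds.sub (hlog.mul tendsto_inv_atTop_zero)
end

section
/- Let K ≥ 1 be an integer and let ζ be a real-valued threshold vector indexed by the nonzero integers l ∈ {−K,…,−1,1,…,K} with ζ_{−K} < … < ζ_{−1} < ζ_1 < … < ζ_K. For each nonzero label k and each r ∈ ℝ define the ordered logit probabilities: p_k(r) = σ(ζ_{k+1} − r) − σ(ζ_k − r) for k ∈ {1,…,K−1}; p_K(r) = 1 − σ(ζ_K − r); p_{−k}(r) = σ(ζ_{−k} − r) − σ(ζ_{−k−1} − r) for k ∈ {1,…,K−1}; and p_{−K}(r) = σ(ζ_{−K} − r). If for every k ∈ {1,…,K} and every r ∈ ℝ one has p_k(r) = p_{−k}(−r), then ζ_{−k} = −ζ_k for every k ∈ {1,…,K}. -/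
lemma sigmoid_injective : Function.Injective sigmoid := by
  intro a b hab
  unfold sigmoid at hab
  have ha : (0:ℝ) < 1 + Real.exp (-a) := by positivity
  have hb : (0:ℝ) < 1 + Real.exp (-b) := by positivity
  field_simp at hab
  have := Real.exp_injective (by linarith : Real.exp (-a) = Real.exp (-b)); linarith

lemma one_sub_sigmoid (t : ℝ) : 1 - sigmoid t = sigmoid (-t) := by
  unfold sigmoid
  have h1 : (0:ℝ) < 1 + Real.exp (-t) := by positivity
  have h2 : (0:ℝ) < 1 + Real.exp (- -t) := by positivity
  have h3 : Real.exp (-t) * Real.exp t = 1 := by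
    rw [← Real.exp_add]; simp
  field_simp
  nlinarith [h3]

/-- Ordered logit probability of the positive preference level `k ∈ {1,…,K}`
given reward difference `r` (with the convention `σ(ζ_{K+1} - r) = 1`). -/
noncomputable def pPos (K : ℤ) (ζ : ℤ → ℝ) (k : ℤ) (r : ℝ) : ℝ :=
  if k = K then 1 - sigmoid (ζ K - r)
  else sigmoid (ζ (k + 1) - r) - sigmoid (ζ k - r)

/-- Ordered logit probability of the negative preference level `-k` for
`k ∈ {1,…,K}` given reward difference `r` (with the convention
`σ(ζ_{-K-1} - r) = 0`). -/
noncomputable def pNeg (K : ℤ) (ζ : ℤ → ℝ) (k : ℤ) (r : ℝ) : ℝ :=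
  if k = K then sigmoid (ζ (-K) - r)
  else sigmoid (ζ (-k) - r) - sigmoid (ζ (-k - 1) - r)

/-- If the ordered logit preference probabilities are symmetric,
i.e. `p_k(r) = p_{-k}(-r)` for all levels `k ∈ {1,…,K}` and all `r`, then the
thresholds are symmetric: `ζ_{-k} = -ζ_k` for all `k ∈ {1,…,K}`. -/
theorem threshold_symmetry
    (K : ℤ) (hK : 1 ≤ K) (ζ : ℤ → ℝ)
    (hζ : ∀ l ∈ Finset.Icc (-K) K \ {0}, ∀ l' ∈ Finset.Icc (-K) K \ {0},
      l < l' → ζ l < ζ l')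
    (hsym : ∀ k, 1 ≤ k → k ≤ K → ∀ r : ℝ, pPos K ζ k r = pNeg K ζ k (-r)) :
    ∀ k, 1 ≤ k → k ≤ K → ζ (-k) = -ζ k := by
  have key : ∀ n : ℕ, ∀ k : ℤ, 1 ≤ k → k + n = K → ζ (-k) = -ζ k := by
    intro n
    induction n with
    | zero =>
      intro k hk1 hkK
      simp at hkK
      subst hkK
      have h := hsym k hk1 le_rfl 0
      simp only [pPos, pNeg, if_pos rfl, neg_zero, sub_zero] at h
      rw [one_sub_sigmoid] at h
      have := sigmoid_injective h.symm
      linarith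
    | succ n ih =>
      intro k hk1 hkK
      have hIH : ζ (-(k+1)) = -ζ (k+1) := by
        apply ih (k+1) (by linarith)
        push_cast at hkK ⊢
        linarith
      have hkne : k ≠ K := by
        intro h; subst h; push_cast at hkK; omega
      have h := hsym k hk1 (by push_cast at hkK; omega) 0
      simp only [pPos, pNeg, if_neg hkne, neg_zero, sub_zero] at h
      have e1 : ζ (-k - 1) = -ζ (k+1) := by
        rw [show (-k - 1 : ℤ) = -(k+1) by ring]; exact hIH
      rw [e1, ← one_sub_sigmoid] at h
      have : sigmoid (ζ (-k)) = sigmoid (-ζ k) := by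
        rw [← one_sub_sigmoid]; linarith
      have := sigmoid_injective this
      linarith
  intro k hk1 hkK
  have : k + ((K - k).toNat : ℤ) = K := by omega
  exact key (K - k).toNat k hk1 this
end

section
/- Let a, b, a′, b′ ∈ ℝ with b′ = −b. If σ(b − r) − σ(a − r) = σ(a′ + r) − σ(b′ + r) holds for every r ∈ ℝ, then a′ = −a. -/
lemma sigmoid_neg (t : ℝ) : sigmoid (-t) = 1 - sigmoid t := by
  unfold sigmoid
  have h1 : (1 : ℝ) + Real.exp (-t) ≠ 0 := by positivity
  have h2 : (1 : ℝ) + Real.exp t ≠ 0 := by positivity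
  rw [neg_neg]
  field_simp
  have hE : Real.exp t * Real.exp (-t) = 1 := by rw [← Real.exp_add]; simp
  linear_combination -hE

/-- Inductive step of threshold symmetry: if `b' = -b` and
`σ(b - r) - σ(a - r) = σ(a' + r) - σ(b' + r)` for all `r`, then `a' = -a`. -/
theorem sigmoid_inductive_symmetry
    (a b a' b' : ℝ) (hb : b' = -b)
    (h : ∀ r : ℝ, sigmoid (b - r) - sigmoid (a - r)
        = sigmoid (a' + r) - sigmoid (b' + r)) :
    a' = -a := by
  have h0 := h 0
  simp [hb, sigmoid_neg] at h0
  have : sigmoid a' = sigmoid (-a) := by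
    rw [sigmoid_neg]; linarith
  exact sigmoid_injective this
end

section
/- Let a, s, b ∈ ℝ with s < a < b. Then lim_{c → ∞} exp(c(a − s))·(σ(c(b − s)) − σ(c(a − s))) = 1; that is, the ordered logit probability σ(c(b − s)) − σ(c(a − s)) is asymptotically equivalent to exp(−c(a − s)) as the scale c tends to infinity. -/
/-- For `s < a < b`, the scaled interval probability is
asymptotically equivalent to `exp(-c(a - s))`. -/
theorem nll_below_interval_asymptotics
    (a s b : ℝ) (hsa : s < a) (hab : a < b) :
    Filter.Tendsto
      (fun c : ℝ =>
        Real.exp (c * (a - s)) * (sigmoid (c * (b - s)) - sigmoid (c * (a - s))))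
      Filter.atTop (nhds 1) := by
  have key : ∀ c : ℝ,
      Real.exp (c * (a - s)) * (sigmoid (c * (b - s)) - sigmoid (c * (a - s)))
        = (1 - Real.exp (c * (a - b))) /
          ((1 + Real.exp (-(c * (b - s)))) * (1 + Real.exp (-(c * (a - s))))) := by
    intro c
    have hx : (1:ℝ) + Real.exp (-(c * (a - s))) ≠ 0 := by positivity
    have hy : (1:ℝ) + Real.exp (-(c * (b - s))) ≠ 0 := by positivity
    have he : Real.exp (c * (a - b))
        = Real.exp (c * (a - s)) * Real.exp (-(c * (b - s))) := by
      rw [← Real.exp_add]; ring_nf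
    have hinv : Real.exp (c * (a - s)) * Real.exp (-(c * (a - s))) = 1 := by
      rw [← Real.exp_add]; ring_nf; exact Real.exp_zero
    simp only [sigmoid]
    rw [he]
    field_simp
    nlinarith [Real.exp_pos (c * (a - s)), Real.exp_pos (-(c * (a - s))),
      Real.exp_pos (-(c * (b - s))), hinv]
  have h1 : Filter.Tendsto (fun c : ℝ => Real.exp (c * (a - b)))
      Filter.atTop (nhds 0) := by
    apply Real.tendsto_exp_atBot.comp
    exact Filter.Tendsto.atTop_mul_const_of_neg (by linarith) Filter.tendsto_id
  have h2 : Filter.Tendsto (fun c : ℝ => Real.exp (-(c * (b - s))))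
      Filter.atTop (nhds 0) := by
    apply Real.tendsto_exp_atBot.comp
    simp only [Filter.tendsto_neg_atBot_iff]
    exact Filter.Tendsto.atTop_mul_const (by linarith) Filter.tendsto_id
  have h3 : Filter.Tendsto (fun c : ℝ => Real.exp (-(c * (a - s))))
      Filter.atTop (nhds 0) := by
    apply Real.tendsto_exp_atBot.comp
    simp only [Filter.tendsto_neg_atBot_iff]
    exact Filter.Tendsto.atTop_mul_const (by linarith) Filter.tendsto_id
  have hnum : Filter.Tendsto (fun c : ℝ => 1 - Real.exp (c * (a - b)))
      Filter.atTop (nhds (1 - 0)) := tendsto_const_nhds.sub h1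
  have hden : Filter.Tendsto
      (fun c : ℝ => (1 + Real.exp (-(c * (b - s)))) * (1 + Real.exp (-(c * (a - s)))))
      Filter.atTop (nhds ((1 + 0) * (1 + 0))) :=
    (tendsto_const_nhds.add h2).mul (tendsto_const_nhds.add h3)
  have := hnum.div hden (by norm_num)
  norm_num at this
  simpa only [key, Pi.div_def] using this
end

section
/- Let a, b, s ∈ ℝ with a < b < s. Then lim_{c → ∞} exp(c(s − b))·(σ(c(b − s)) − σ(c(a − s))) = 1; that is, the ordered logit probability σ(c(b − s)) − σ(c(a − s)) is asymptotically equivalent to exp(−c(s − b)) as the scale c tends to infinity. -/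
open Filter

lemma exp_mul_tendsto_zero {k : ℝ} (hk : k < 0) :
    Tendsto (fun c : ℝ => Real.exp (c * k)) atTop (nhds 0) :=
  Real.tendsto_exp_atBot.comp (tendsto_id.atTop_mul_const_of_neg hk)

/-- For `a < b < s`, the scaled interval probability is
asymptotically equivalent to `exp(-c(s - b))`. -/
theorem nll_above_interval_asymptotics
    (a b s : ℝ) (hab : a < b) (hbs : b < s) :
    Filter.Tendsto
      (fun c : ℝ =>
        Real.exp (c * (s - b)) * (sigmoid (c * (b - s)) - sigmoid (c * (a - s))))
      Filter.atTop (nhds 1) := by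
  have h1 : Tendsto (fun c : ℝ => Real.exp (c * (b - s))) atTop (nhds 0) :=
    exp_mul_tendsto_zero (by linarith)
  have h2 : Tendsto (fun c : ℝ => Real.exp (c * (a - b))) atTop (nhds 0) :=
    exp_mul_tendsto_zero (by linarith)
  have h3 : Tendsto (fun c : ℝ => Real.exp (c * (a - s))) atTop (nhds 0) :=
    exp_mul_tendsto_zero (by linarith)
  have key : Tendsto
      (fun c : ℝ => (Real.exp (c * (b - s)) + 1)⁻¹
        - Real.exp (c * (a - b)) * (Real.exp (c * (a - s)) + 1)⁻¹)
      atTop (nhds 1) := by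
    have hA : Tendsto (fun c : ℝ => Real.exp (c * (b - s)) + 1) atTop (nhds 1) := by
      simpa using h1.add (tendsto_const_nhds (x := (1:ℝ)))
    have hB : Tendsto (fun c : ℝ => Real.exp (c * (a - s)) + 1) atTop (nhds 1) := by
      simpa using h3.add (tendsto_const_nhds (x := (1:ℝ)))
    have := ((hA.inv₀ one_ne_zero).sub (h2.mul (hB.inv₀ one_ne_zero)))
    simpa using this
  refine key.congr (fun c => ?_)
  have e1 : Real.exp (c * (s - b)) = (Real.exp (c * (b - s)))⁻¹ := by
    rw [← Real.exp_neg]; ring_nf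
  have e2 : Real.exp (c * (a - b)) = Real.exp (c * (a - s)) * Real.exp (c * (s - b)) := by
    rw [← Real.exp_add]; ring_nf
  have p1 := (Real.exp_pos (c * (b - s)))
  have p2 := (Real.exp_pos (c * (a - s)))
  simp only [sigmoid, neg_mul, neg_sub]
  rw [show -(c * (b - s)) = c * (s - b) by ring, show -(c * (a - s)) = c * (s - a) by ring]
  rw [e2, e1]
  have hsa : Real.exp (c * (s - a)) = (Real.exp (c * (a - s)))⁻¹ := by
    rw [← Real.exp_neg]; ring_nf
  rw [hsa]
  generalize hx : Real.exp (c * (b - s)) = x at p1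
  generalize hy : Real.exp (c * (a - s)) = y at p2
  have h1x : (1:ℝ) + x⁻¹ ≠ 0 := by positivity
  have h1y : (1:ℝ) + y⁻¹ ≠ 0 := by positivity
  field_simp
end
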